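/- arXiv:1104.3768 — 2 statements merged into one kernel-verified Lean document; each statement's English description precedes it below -/
import Mathlib

section
/- Let ρ((s,x),(t,y)) := max(|t-s|^{1/2}, ‖x-y‖) be the parabolic metric on ℝ₊ × ℝ^d. For every probability measure μ on ℝ₊ × ℝ^d and every β > 0, the parabolic energy ∫∫ 1_{s≠t} exp(-‖x-y‖²/(2|t-s|)) |t-s|^{-β} dμ dμ is at most max(c,1) times the Bessel–Riesz energy ∫∫ ρ((s,x),(t,y))^{-2β} dμ dμ, where c := sup_{z>1} z^{2β} e^{-z/2}. -/
open MeasureTheory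

/-- The parabolic metric `ρ((s,x),(t,y)) = max(√|t-s|, ‖x-y‖)` on `ℝ₊ × ℝ^d`. -/
noncomputable def pRho (d : ℕ) (p q : ℝ × EuclideanSpace ℝ (Fin d)) : ℝ :=
  max (Real.sqrt |p.1 - q.1|) (dist p.2 q.2)

lemma pRho_bdd (β : ℝ) :
    BddAbove ((fun z : ℝ => z ^ (2 * β) * Real.exp (-z / 2)) '' Set.Ioi 1) := by
  set n := ⌈2 * β⌉₊ with hn
  refine ⟨2 ^ n * n.factorial, ?_⟩
  rintro _ ⟨z, hz, rfl⟩
  simp only [Set.mem_Ioi] at hz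
  have hz0 : (0 : ℝ) < z := lt_trans one_pos hz
  have h1 : z ^ (2 * β) ≤ z ^ n := by
    calc z ^ (2 * β) ≤ z ^ (n : ℝ) :=
          Real.rpow_le_rpow_of_exponent_le hz.le (Nat.le_ceil _)
      _ = z ^ n := Real.rpow_natCast z n
  have h2 : (z / 2) ^ n / n.factorial ≤ Real.exp (z / 2) :=
    Real.pow_div_factorial_le_exp (x := z / 2) (by positivity) n
  have h3 : z ^ n * Real.exp (-z / 2) ≤ 2 ^ n * n.factorial := by
    have hfac : (0 : ℝ) < n.factorial := by positivity
    have h4 : (z / 2) ^ n ≤ n.factorial * Real.exp (z / 2) := by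
      rw [div_le_iff₀ hfac] at h2; linarith [h2]
    have h5 : z ^ n ≤ 2 ^ n * (n.factorial * Real.exp (z / 2)) := by
      have hzz : z ^ n = 2 ^ n * (z / 2) ^ n := by
        rw [← mul_pow]; ring_nf
      rw [hzz]
      exact mul_le_mul_of_nonneg_left h4 (by positivity)
    have h5E := mul_le_mul_of_nonneg_right h5 (Real.exp_pos (-z / 2)).le
    calc z ^ n * Real.exp (-z / 2)
        ≤ 2 ^ n * (n.factorial * Real.exp (z / 2)) * Real.exp (-z / 2) := h5E
      _ = 2 ^ n * n.factorial * (Real.exp (z / 2) * Real.exp (-z / 2)) := by ring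
      _ = 2 ^ n * n.factorial := by rw [← Real.exp_add]; ring_nf; simp
  calc z ^ (2 * β) * Real.exp (-z / 2) ≤ z ^ n * Real.exp (-z / 2) :=
        mul_le_mul_of_nonneg_right h1 (Real.exp_pos _).le
    _ ≤ 2 ^ n * n.factorial := h3

lemma pRho_key (β : ℝ) (hβ : 0 < β) (τ r : ℝ) (hτ : 0 < τ) (hr : 0 ≤ r) :
    Real.exp (-r ^ 2 / (2 * τ)) / τ ^ β ≤
      max (sSup ((fun z : ℝ => z ^ (2 * β) * Real.exp (-z / 2)) '' Set.Ioi 1)) 1 *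
        (max (Real.sqrt τ) r ^ (2 * β))⁻¹ := by
  set c := sSup ((fun z : ℝ => z ^ (2 * β) * Real.exp (-z / 2)) '' Set.Ioi 1) with hc
  have hτβ : (0 : ℝ) < τ ^ β := Real.rpow_pos_of_pos hτ _
  rcases le_or_gt r (Real.sqrt τ) with hcase | hcase
  · -- ρ = √τ
    have hmax : max (Real.sqrt τ) r = Real.sqrt τ := max_eq_left hcase
    have hpow : Real.sqrt τ ^ (2 * β) = τ ^ β := by
      rw [Real.sqrt_eq_rpow, ← Real.rpow_mul hτ.le]
      congr 1; ring
    rw [hmax, hpow]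
    have hexp : Real.exp (-r ^ 2 / (2 * τ)) ≤ 1 := by
      rw [Real.exp_le_one_iff]
      have : (0:ℝ) ≤ r ^ 2 / (2 * τ) := by positivity
      linarith [this, (neg_div (2*τ) (r^2)) ▸ neg_nonpos_of_nonneg this]
    calc Real.exp (-r ^ 2 / (2 * τ)) / τ ^ β ≤ 1 / τ ^ β := by gcongr
      _ = 1 * (τ ^ β)⁻¹ := by rw [one_div]; ring
      _ ≤ max c 1 * (τ ^ β)⁻¹ :=
          mul_le_mul_of_nonneg_right (le_max_right _ _) (by positivity)
  · -- ρ = r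
    have hr0 : 0 < r := lt_of_le_of_lt (Real.sqrt_nonneg τ) hcase
    have hmax : max (Real.sqrt τ) r = r := max_eq_right hcase.le
    set z := r ^ 2 / τ with hzdef
    have hz0 : 0 < z := by positivity
    have hz1 : 1 < z := by
      rw [hzdef, lt_div_iff₀ hτ, one_mul]
      calc τ = Real.sqrt τ ^ 2 := (Real.sq_sqrt hτ.le).symm
        _ < r ^ 2 := by
            apply pow_lt_pow_left₀ hcase (Real.sqrt_nonneg τ)
            norm_num
    have hr2 : r ^ 2 = z * τ := by
      rw [hzdef]; field_simp
    have hexp_eq : Real.exp (-r ^ 2 / (2 * τ)) = Real.exp (-z / 2) := by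
      congr 1
      rw [hr2]; field_simp
    have hrpow : r ^ (2 * β) = z ^ β * τ ^ β := by
      have : r ^ (2 * β) = (r ^ 2) ^ β := by
        rw [← Real.rpow_natCast r 2, ← Real.rpow_mul hr0.le]
        norm_num
      rw [this, hr2, Real.mul_rpow hz0.le hτ.le]
    have hcge : z ^ β * Real.exp (-z / 2) ≤ c := by
      calc z ^ β * Real.exp (-z / 2) ≤ z ^ (2 * β) * Real.exp (-z / 2) := by
            apply mul_le_mul_of_nonneg_right _ (Real.exp_pos _).le
            exact Real.rpow_le_rpow_of_exponent_le hz1.le (by linarith)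
        _ ≤ c := le_csSup (pRho_bdd β) ⟨z, hz1, rfl⟩
    rw [hmax, hexp_eq, hrpow]
    have hzβ : (0 : ℝ) < z ^ β := Real.rpow_pos_of_pos hz0 _
    have heq : max c 1 * (z ^ β * τ ^ β)⁻¹ = (max c 1 / z ^ β) / τ ^ β := by
      field_simp
    rw [heq, div_le_div_iff_of_pos_right hτβ, le_div_iff₀ hzβ, mul_comm]
    exact hcge.trans (le_max_left _ _)

/-- For every probability measure `μ` on `ℝ₊ × ℝ^d` and every `β > 0`, the parabolic
energy `∫∫ 1_{s≠t} e^{-‖x-y‖²/(2|t-s|)} |t-s|^{-β} dμ dμ` is at most `max(c,1)` times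
the Bessel–Riesz energy `∫∫ ρ((s,x),(t,y))^{-2β} dμ dμ`, with
`c := sup_{z>1} z^{2β} e^{-z/2}`. -/
theorem statement3 (d : ℕ) (β : ℝ) (hβ : 0 < β)
    (μ : Measure (ℝ × EuclideanSpace ℝ (Fin d))) [IsProbabilityMeasure μ]
    (hsupp : μ {p | p.1 < 0} = 0) :
    (∫⁻ p, ∫⁻ q,
        (if p.1 = q.1 then 0 else
          ENNReal.ofReal
            (Real.exp (-(dist p.2 q.2) ^ 2 / (2 * |p.1 - q.1|)) / |p.1 - q.1| ^ β))
          ∂μ ∂μ) ≤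
      ENNReal.ofReal
          (max (sSup ((fun z : ℝ => z ^ (2 * β) * Real.exp (-z / 2)) '' Set.Ioi 1)) 1) *
        ∫⁻ p, ∫⁻ q, 1 / ENNReal.ofReal (pRho d p q ^ (2 * β)) ∂μ ∂μ := by
  set c := sSup ((fun z : ℝ => z ^ (2 * β) * Real.exp (-z / 2)) '' Set.Ioi 1) with hc
  set C : ENNReal := ENNReal.ofReal (max c 1) with hC
  have hmaxnn : (0 : ℝ) ≤ max c 1 := le_trans zero_le_one (le_max_right _ _)
  have hpoint : ∀ p q : ℝ × EuclideanSpace ℝ (Fin d),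
      (if p.1 = q.1 then 0 else
        ENNReal.ofReal
          (Real.exp (-(dist p.2 q.2) ^ 2 / (2 * |p.1 - q.1|)) / |p.1 - q.1| ^ β)) ≤
      C * (1 / ENNReal.ofReal (pRho d p q ^ (2 * β))) := by
    intro p q
    by_cases h : p.1 = q.1
    · simp [h]
    · simp only [h, if_false]
      have hτ : 0 < |p.1 - q.1| := abs_pos.mpr (sub_ne_zero.mpr h)
      have hρ : 0 < pRho d p q := by
        unfold pRho
        exact lt_max_of_lt_left (Real.sqrt_pos.mpr hτ)
      have hρpow : 0 < pRho d p q ^ (2 * β) := Real.rpow_pos_of_pos hρ _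
      rw [one_div, ← ENNReal.ofReal_inv_of_pos hρpow, ← ENNReal.ofReal_mul hmaxnn]
      exact ENNReal.ofReal_le_ofReal
        (pRho_key β hβ _ _ hτ dist_nonneg)
  calc (∫⁻ p, ∫⁻ q,
        (if p.1 = q.1 then 0 else
          ENNReal.ofReal
            (Real.exp (-(dist p.2 q.2) ^ 2 / (2 * |p.1 - q.1|)) / |p.1 - q.1| ^ β))
          ∂μ ∂μ)
      ≤ ∫⁻ p, ∫⁻ q, C * (1 / ENNReal.ofReal (pRho d p q ^ (2 * β))) ∂μ ∂μ :=
        lintegral_mono fun p => lintegral_mono fun q => hpoint p q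
    _ = C * ∫⁻ p, ∫⁻ q, 1 / ENNReal.ofReal (pRho d p q ^ (2 * β)) ∂μ ∂μ := by
        simp_rw [lintegral_const_mul' C _ ENNReal.ofReal_ne_top]
end

section
/- Let W be standard Brownian motion in ℝ^d. There is a finite constant C such that, uniformly for all r ∈ (0,1), all intervals I = [t−r², t+r²] ⊂ [1/q, q] (with q > 1 fixed), and all closed Euclidean balls J ⊂ [−q,q]^d of radius r: P{ W(I) ∩ J ≠ ∅ } ≤ C r^d. -/
open MeasureTheory
open scoped ENNReal

/-- The heat kernel `p_t(x) = (2πt)^{-d/2} e^{-‖x‖²/(2t)} 1_{(0,∞)}(t)`. -/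
noncomputable def heatKernel (d : ℕ) (t : ℝ) (x : EuclideanSpace ℝ (Fin d)) : ℝ :=
  if 0 < t then (2 * Real.pi * t) ^ (-(d : ℝ) / 2) * Real.exp (-‖x‖ ^ 2 / (2 * t)) else 0

/-- `W` is a standard `d`-dimensional Brownian motion under `ℙ`: it starts at `0`,
has a.s. continuous paths, independent increments, and `W_t - W_s` has the Gaussian
density `p_{t-s}` for `0 ≤ s < t`. -/
structure IsBrownianMotion {Ω : Type*} [MeasurableSpace Ω] (ℙ : Measure Ω) {d : ℕ}
    (W : ℝ → Ω → EuclideanSpace ℝ (Fin d)) : Prop where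
  meas : ∀ t, Measurable (W t)
  start : ∀ᵐ ω ∂ℙ, W 0 ω = 0
  cont : ∀ᵐ ω ∂ℙ, Continuous fun t => W t ω
  incr : ∀ s t : ℝ, 0 ≤ s → s < t →
    Measure.map (fun ω => W t ω - W s ω) ℙ =
      volume.withDensity fun x => ENNReal.ofReal (heatKernel d (t - s) x)
  indep : ∀ (n : ℕ) (ts : Fin (n + 1) → ℝ), Monotone ts → (∀ i, 0 ≤ ts i) →
    ProbabilityTheory.iIndepFun
      (m := fun _ : Fin n => (inferInstance : MeasurableSpace (EuclideanSpace ℝ (Fin d))))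
      (fun i ω => W (ts i.succ) ω - W (ts i.castSucc) ω) ℙ

open ProbabilityTheory (iIndepFun Indep indep_biSup_compl Indep_iff)

lemma measurable_heatKernel_ofReal (d : ℕ) (t : ℝ) :
    Measurable fun x : EuclideanSpace ℝ (Fin d) => ENNReal.ofReal (heatKernel d t x) := by
  apply ENNReal.measurable_ofReal.comp
  unfold heatKernel
  split_ifs with h
  · fun_prop
  · exact measurable_const

lemma measure_incr_mem {d : ℕ} {Ω : Type*} [MeasurableSpace Ω] {ℙ : Measure Ω}
    {W : ℝ → Ω → EuclideanSpace ℝ (Fin d)} (hW : IsBrownianMotion ℙ W)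
    {s t : ℝ} (hs : 0 ≤ s) (hst : s < t) {B : Set (EuclideanSpace ℝ (Fin d))}
    (hB : MeasurableSet B) :
    ℙ {ω | W t ω - W s ω ∈ B} = ∫⁻ x in B, ENNReal.ofReal (heatKernel d (t - s) x) := by
  have hm : Measurable fun ω => W t ω - W s ω := (hW.meas t).sub (hW.meas s)
  have h1 : {ω | W t ω - W s ω ∈ B} = (fun ω => W t ω - W s ω) ⁻¹' B := rfl
  rw [h1, ← Measure.map_apply hm hB, hW.incr s t hs hst, withDensity_apply _ hB]

lemma indep_key {d : ℕ} {Ω : Type*} [MeasurableSpace Ω] {ℙ : Measure Ω}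
    {W : ℝ → Ω → EuclideanSpace ℝ (Fin d)} (hW : IsBrownianMotion ℙ W)
    (N : ℕ) (u : ℕ → ℝ) (hu : Monotone u) (hupos : ∀ k, 0 ≤ u k)
    (i : ℕ) (hiN : i + 2 ≤ N) (B2 B0 : Set (EuclideanSpace ℝ (Fin d)))
    (hB2 : MeasurableSet B2) (hB0 : MeasurableSet B0) :
    ℙ ({ω | W (u (i+1)) ω - W (u 0) ω ∈ B2 ∧ ∀ j < i, W (u (j+1)) ω - W (u 0) ω ∉ B2}
        ∩ {ω | W (u N) ω - W (u (i+1)) ω ∈ B0})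
      = ℙ {ω | W (u (i+1)) ω - W (u 0) ω ∈ B2 ∧ ∀ j < i, W (u (j+1)) ω - W (u 0) ω ∉ B2}
        * ℙ {ω | W (u N) ω - W (u (i+1)) ω ∈ B0} := by
  obtain ⟨M, rfl⟩ : ∃ M, N = M + 1 := ⟨N - 1, by omega⟩
  set g : ℕ → Ω → EuclideanSpace ℝ (Fin d) := fun k ω => W (u (k+1)) ω - W (u k) ω with hg
  have hgmeas : ∀ k, Measurable (g k) := fun k => (hW.meas _).sub (hW.meas _)
  have hindep : iIndepFun (m := fun _ : Fin (M+1) => (inferInstance : MeasurableSpace (EuclideanSpace ℝ (Fin d))))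
      (fun (k : Fin (M+1)) => g k.val) ℙ := by
    exact hW.indep (M+1) (fun k : Fin (M+2) => u k.val)
      (fun k l hkl => hu hkl) (fun k => hupos _)
  set mco : Fin (M+1) → MeasurableSpace Ω := fun k => MeasurableSpace.comap (g k.val) inferInstance
    with hmco
  have hle : ∀ k, mco k ≤ _ := fun k => (hgmeas _).comap_le
  set S : Set (Fin (M+1)) := {k | k.val ≤ i} with hS
  have hInd : Indep (⨆ k ∈ S, mco k) (⨆ k ∈ Sᶜ, mco k) ℙ :=
    indep_biSup_compl hle hindep.iIndep S
  have hsum : ∀ (m : ℕ) (ω : Ω), (∑ k ∈ Finset.range m, g k ω) = W (u m) ω - W (u 0) ω :=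
    fun m ω => Finset.sum_range_sub (fun k => W (u k) ω) m
  have hSW : ∀ j, j ≤ i → Measurable[⨆ k ∈ S, mco k]
      (fun ω => W (u (j+1)) ω - W (u 0) ω) := by
    intro j hj
    have heq : (fun ω => W (u (j+1)) ω - W (u 0) ω)
        = fun ω => ∑ k ∈ Finset.range (j+1), g k ω := by
      funext ω; rw [hsum]
    rw [heq]
    refine Finset.measurable_sum _ fun k hk => ?_
    have hk' := Finset.mem_range.mp hk
    have hkM : k < M + 1 := by omega
    have hkS : (⟨k, hkM⟩ : Fin (M+1)) ∈ S := by simp only [hS, Set.mem_setOf_eq]; omega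
    exact Measurable.of_comap_le (le_biSup mco hkS)
  have hZ : Measurable[⨆ k ∈ Sᶜ, mco k] (fun ω => W (u (M+1)) ω - W (u (i+1)) ω) := by
    have heq : (fun ω => W (u (M+1)) ω - W (u (i+1)) ω)
        = fun ω => ∑ k ∈ Finset.Ico (i+1) (M+1), g k ω := by
      funext ω
      rw [Finset.sum_Ico_eq_sub _ (by omega), hsum, hsum]; abel
    rw [heq]
    refine Finset.measurable_sum _ fun k hk => ?_
    have hk' := Finset.mem_Ico.mp hk
    have hkS : (⟨k, hk'.2⟩ : Fin (M+1)) ∈ Sᶜ := by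
      simp only [hS, Set.mem_compl_iff, Set.mem_setOf_eq]; omega
    exact Measurable.of_comap_le (le_biSup mco hkS)
  have hGset : MeasurableSet[⨆ k ∈ S, mco k]
      {ω | W (u (i+1)) ω - W (u 0) ω ∈ B2 ∧ ∀ j < i, W (u (j+1)) ω - W (u 0) ω ∉ B2} := by
    have hdecomp : {ω | W (u (i+1)) ω - W (u 0) ω ∈ B2 ∧ ∀ j < i, W (u (j+1)) ω - W (u 0) ω ∉ B2}
        = ((fun ω => W (u (i+1)) ω - W (u 0) ω) ⁻¹' B2)
          ∩ ⋂ (j : ℕ), ⋂ (_ : j < i), ((fun ω => W (u (j+1)) ω - W (u 0) ω) ⁻¹' B2)ᶜ := by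
      ext ω; simp [Set.mem_iInter]
    rw [hdecomp]
    exact ((hSW i le_rfl) hB2).inter
      (MeasurableSet.iInter fun j => MeasurableSet.iInter fun hj => ((hSW j hj.le) hB2).compl)
  have hHset : MeasurableSet[⨆ k ∈ Sᶜ, mco k]
      {ω | W (u (M+1)) ω - W (u (i+1)) ω ∈ B0} := hZ hB0
  exact (Indep_iff _ _ _).mp hInd _ _ hGset hHset

lemma measure_ball_upper {d : ℕ} {Ω : Type*} [MeasurableSpace Ω] {ℙ : Measure Ω}
    {W : ℝ → Ω → EuclideanSpace ℝ (Fin d)} (hW : IsBrownianMotion ℙ W)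
    {q : ℝ} (hq : 1 < q) {T : ℝ} (hT : 1 / q ≤ T) (z : EuclideanSpace ℝ (Fin d))
    {ρ : ℝ} (hρ : 0 ≤ ρ) :
    ℙ {ω | W T ω - W 0 ω ∈ Metric.closedBall z ρ}
      ≤ ENNReal.ofReal ((q / (2 * Real.pi)) ^ ((d : ℝ) / 2)) *
        (ENNReal.ofReal (ρ ^ d) * volume (Metric.closedBall (0 : EuclideanSpace ℝ (Fin d)) 1)) := by
  have hπ := Real.pi_pos
  have hq0 : 0 < q := lt_trans one_pos hq
  have hT0 : 0 < T := lt_of_lt_of_le (by positivity) hT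
  have hpt : ∀ x ∈ Metric.closedBall z ρ,
      ENNReal.ofReal (heatKernel d T x) ≤ ENNReal.ofReal ((q / (2 * Real.pi)) ^ ((d : ℝ) / 2)) := by
    intro x _
    apply ENNReal.ofReal_le_ofReal
    rw [heatKernel, if_pos hT0]
    have h1 : Real.exp (-‖x‖ ^ 2 / (2 * T)) ≤ 1 := by
      rw [Real.exp_le_one_iff]
      have : (0:ℝ) ≤ ‖x‖ ^ 2 / (2 * T) := by positivity
      rw [neg_div]; linarith
    have h2 : (2 * Real.pi * T) ^ (-(d : ℝ) / 2) ≤ (q / (2 * Real.pi)) ^ ((d : ℝ) / 2) := by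
      have hb : (0:ℝ) < 2 * Real.pi / q := by positivity
      have hbT : 2 * Real.pi / q ≤ 2 * Real.pi * T := by
        rw [div_le_iff₀ hq0] at *
        nlinarith [hT, hq0, hπ]
      have hmono : (2 * Real.pi * T) ^ (-(d : ℝ) / 2) ≤ (2 * Real.pi / q) ^ (-(d : ℝ) / 2) :=
        Real.rpow_le_rpow_of_nonpos hb hbT (by have := Nat.cast_nonneg (α := ℝ) d; linarith)
      refine le_trans hmono (le_of_eq ?_)
      rw [neg_div, Real.rpow_neg hb.le, ← Real.inv_rpow hb.le]
      congr 1
      field_simp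
    calc (2 * Real.pi * T) ^ (-(d : ℝ) / 2) * Real.exp (-‖x‖ ^ 2 / (2 * T))
        ≤ (2 * Real.pi * T) ^ (-(d : ℝ) / 2) * 1 := by
          apply mul_le_mul_of_nonneg_left h1 (Real.rpow_nonneg (by positivity) _)
      _ ≤ (q / (2 * Real.pi)) ^ ((d : ℝ) / 2) := by rw [mul_one]; exact h2
  calc ℙ {ω | W T ω - W 0 ω ∈ Metric.closedBall z ρ}
      = ∫⁻ x in Metric.closedBall z ρ, ENNReal.ofReal (heatKernel d (T - 0) x) :=
        measure_incr_mem hW le_rfl hT0 measurableSet_closedBall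
    _ = ∫⁻ x in Metric.closedBall z ρ, ENNReal.ofReal (heatKernel d T x) := by rw [sub_zero]
    _ ≤ ∫⁻ _ in Metric.closedBall z ρ, ENNReal.ofReal ((q / (2 * Real.pi)) ^ ((d : ℝ) / 2)) :=
        setLIntegral_mono measurable_const hpt
    _ = ENNReal.ofReal ((q / (2 * Real.pi)) ^ ((d : ℝ) / 2)) * volume (Metric.closedBall z ρ) :=
        setLIntegral_const _ _
    _ = _ := by
        rw [Measure.addHaar_closedBall' _ _ hρ, finrank_euclideanSpace_fin]

lemma measure_ball_lower {d : ℕ} {Ω : Type*} [MeasurableSpace Ω] {ℙ : Measure Ω}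
    {W : ℝ → Ω → EuclideanSpace ℝ (Fin d)} (hW : IsBrownianMotion ℙ W)
    {s T r : ℝ} (hs : 0 ≤ s) (hr : 0 < r)
    (h1 : r ^ 2 ≤ T - s) (h2 : T - s ≤ 3 * r ^ 2) :
    ENNReal.ofReal ((6 * Real.pi) ^ (-(d : ℝ) / 2) * Real.exp (-2) * 2 ^ d) *
        volume (Metric.closedBall (0 : EuclideanSpace ℝ (Fin d)) 1)
      ≤ ℙ {ω | W T ω - W s ω ∈ Metric.closedBall 0 (2 * r)} := by
  have hπ := Real.pi_pos
  have hτ0 : 0 < T - s := lt_of_lt_of_le (by positivity) h1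
  have hsT : s < T := by linarith
  have hpt : ∀ x ∈ Metric.closedBall (0 : EuclideanSpace ℝ (Fin d)) (2 * r),
      ENNReal.ofReal ((2 * Real.pi * (3 * r ^ 2)) ^ (-(d : ℝ) / 2) * Real.exp (-2))
        ≤ ENNReal.ofReal (heatKernel d (T - s) x) := by
    intro x hx
    apply ENNReal.ofReal_le_ofReal
    rw [heatKernel, if_pos hτ0]
    have hxn : ‖x‖ ≤ 2 * r := by
      rwa [Metric.mem_closedBall, dist_zero_right] at hx
    have hx2 : ‖x‖ ^ 2 ≤ 4 * r ^ 2 := by nlinarith [norm_nonneg x]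
    have hexp : Real.exp (-2) ≤ Real.exp (-‖x‖ ^ 2 / (2 * (T - s))) := by
      apply Real.exp_le_exp.mpr
      rw [neg_div, neg_le_neg_iff]
      rw [div_le_iff₀ (by positivity)]
      nlinarith [h1]
    have hpow : (2 * Real.pi * (3 * r ^ 2)) ^ (-(d : ℝ) / 2)
        ≤ (2 * Real.pi * (T - s)) ^ (-(d : ℝ) / 2) :=
      Real.rpow_le_rpow_of_nonpos (by positivity) (by nlinarith) (by have := Nat.cast_nonneg (α := ℝ) d; linarith)
    exact mul_le_mul hpow hexp (Real.exp_pos _).le (Real.rpow_nonneg (by positivity) _)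
  have hvol : volume (Metric.closedBall (0 : EuclideanSpace ℝ (Fin d)) (2 * r))
      = ENNReal.ofReal ((2 * r) ^ d) *
        volume (Metric.closedBall (0 : EuclideanSpace ℝ (Fin d)) 1) := by
    rw [Measure.addHaar_closedBall' _ _ (by positivity), finrank_euclideanSpace_fin]
  have hconst : ENNReal.ofReal ((2 * Real.pi * (3 * r ^ 2)) ^ (-(d : ℝ) / 2) * Real.exp (-2)) *
        ENNReal.ofReal ((2 * r) ^ d)
      = ENNReal.ofReal ((6 * Real.pi) ^ (-(d : ℝ) / 2) * Real.exp (-2) * 2 ^ d) := by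
    rw [← ENNReal.ofReal_mul (by positivity)]
    congr 1
    have e1 : (2 * Real.pi * (3 * r ^ 2)) = (6 * Real.pi) * r ^ 2 := by ring
    have e2 : ((6 * Real.pi) * r ^ 2) ^ (-(d : ℝ) / 2)
        = (6 * Real.pi) ^ (-(d : ℝ) / 2) * (r ^ 2) ^ (-(d : ℝ) / 2) :=
      Real.mul_rpow (by positivity) (by positivity)
    have e3 : ((r : ℝ) ^ 2) ^ (-(d : ℝ) / 2) * r ^ d = 1 := by
      rw [← Real.rpow_natCast r 2, ← Real.rpow_natCast r d, ← Real.rpow_mul hr.le,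
        ← Real.rpow_add hr]
      rw [show ((2:ℕ):ℝ) * (-(d : ℝ) / 2) + ((d:ℕ):ℝ) = 0 by push_cast; ring]
      exact Real.rpow_zero r
    rw [e1, e2, mul_pow]
    calc (6 * Real.pi) ^ (-(d : ℝ) / 2) * (r ^ 2) ^ (-(d : ℝ) / 2) * Real.exp (-2) *
          ((2:ℝ) ^ d * r ^ d)
        = (6 * Real.pi) ^ (-(d : ℝ) / 2) * Real.exp (-2) * 2 ^ d *
          ((r ^ 2) ^ (-(d : ℝ) / 2) * r ^ d) := by ring
      _ = _ := by rw [e3, mul_one]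
  calc ENNReal.ofReal ((6 * Real.pi) ^ (-(d : ℝ) / 2) * Real.exp (-2) * 2 ^ d) *
        volume (Metric.closedBall (0 : EuclideanSpace ℝ (Fin d)) 1)
      = ENNReal.ofReal ((2 * Real.pi * (3 * r ^ 2)) ^ (-(d : ℝ) / 2) * Real.exp (-2)) *
        volume (Metric.closedBall (0 : EuclideanSpace ℝ (Fin d)) (2 * r)) := by
        rw [hvol, ← mul_assoc, hconst]
    _ = ∫⁻ _ in Metric.closedBall (0 : EuclideanSpace ℝ (Fin d)) (2 * r),
          ENNReal.ofReal ((2 * Real.pi * (3 * r ^ 2)) ^ (-(d : ℝ) / 2) * Real.exp (-2)) :=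
        (setLIntegral_const _ _).symm
    _ ≤ ∫⁻ x in Metric.closedBall (0 : EuclideanSpace ℝ (Fin d)) (2 * r),
          ENNReal.ofReal (heatKernel d (T - s) x) :=
        setLIntegral_mono (measurable_heatKernel_ofReal d (T - s)) hpt
    _ = ℙ {ω | W T ω - W s ω ∈ Metric.closedBall 0 (2 * r)} :=
        (measure_incr_mem hW hs hsT measurableSet_closedBall).symm

set_option maxHeartbeats 1000000 in
/-- There is a finite constant `C` such that, uniformly for all `r ∈ (0,1)`, all
intervals `I = [t-r², t+r²] ⊂ [1/q, q]`, and all closed balls `J ⊂ [-q,q]^d` of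
radius `r`: `P{W(I) ∩ J ≠ ∅} ≤ C r^d`. -/
theorem statement15 (d : ℕ) (hd : 1 ≤ d) (q : ℝ) (hq : 1 < q)
    {Ω : Type*} [MeasurableSpace Ω] (ℙ : Measure Ω) [IsProbabilityMeasure ℙ]
    (W : ℝ → Ω → EuclideanSpace ℝ (Fin d)) (hW : IsBrownianMotion ℙ W) :
    ∃ C : ℝ, 0 < C ∧
      ∀ r ∈ Set.Ioo (0 : ℝ) 1, ∀ t : ℝ,
        Set.Icc (t - r ^ 2) (t + r ^ 2) ⊆ Set.Icc (1 / q) q →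
        ∀ z : EuclideanSpace ℝ (Fin d),
          Metric.closedBall z r ⊆ {x : EuclideanSpace ℝ (Fin d) | ∀ i, |x i| ≤ q} →
          ℙ {ω | ∃ s ∈ Set.Icc (t - r ^ 2) (t + r ^ 2),
              W s ω ∈ Metric.closedBall z r} ≤ ENNReal.ofReal (C * r ^ d) := by
  classical
  have hπ := Real.pi_pos
  have hq0 : 0 < q := lt_trans one_pos hq
  set V1 : ℝ≥0∞ := volume (Metric.closedBall (0 : EuclideanSpace ℝ (Fin d)) 1) with hV1
  set KU : ℝ≥0∞ := ENNReal.ofReal ((q / (2 * Real.pi)) ^ ((d : ℝ) / 2)) *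
    (ENNReal.ofReal ((4 : ℝ) ^ d) * V1) with hKU
  set KL : ℝ≥0∞ := ENNReal.ofReal ((6 * Real.pi) ^ (-(d : ℝ) / 2) * Real.exp (-2) * 2 ^ d) * V1
    with hKL
  have hV1pos : 0 < V1 := Metric.measure_closedBall_pos _ _ one_pos
  have hV1top : V1 ≠ ⊤ := measure_closedBall_lt_top.ne
  have hKL0 : KL ≠ 0 := by
    rw [hKL]
    apply mul_ne_zero _ hV1pos.ne'
    rw [Ne, ENNReal.ofReal_eq_zero, not_le]
    positivity
  have hKLtop : KL ≠ ⊤ := ENNReal.mul_ne_top ENNReal.ofReal_ne_top hV1top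
  have hKUtop : KU ≠ ⊤ :=
    ENNReal.mul_ne_top ENNReal.ofReal_ne_top (ENNReal.mul_ne_top ENNReal.ofReal_ne_top hV1top)
  have hKK : KU / KL ≠ ⊤ := (ENNReal.div_lt_top hKUtop hKL0).ne
  refine ⟨(KU / KL).toReal + 1, add_pos_of_nonneg_of_pos ENNReal.toReal_nonneg one_pos, ?_⟩
  intro r hr t hI z _
  obtain ⟨hr0, hr1⟩ := hr
  have hr2 : (0:ℝ) < r ^ 2 := by positivity
  have hab : t - r ^ 2 ≤ t + r ^ 2 := by linarith
  have ha : 1 / q ≤ t - r ^ 2 := (hI (Set.left_mem_Icc.mpr hab)).1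
  have hb : t + r ^ 2 ≤ q := (hI (Set.right_mem_Icc.mpr hab)).2
  have ha0 : 0 < t - r ^ 2 := lt_of_lt_of_le (by positivity) ha
  set T : ℝ := t + 2 * r ^ 2 with hTdef
  have hTq : 1 / q ≤ T := le_trans ha (by simp only [hTdef]; linarith)
  -- the grid
  set sg : ℕ → ℕ → ℝ := fun n i => (t - r ^ 2) + i * (2 * r ^ 2 / n) with hsg
  set u : ℕ → ℕ → ℝ := fun n k => if k = 0 then 0 else if k ≤ n + 1 then sg n (k - 1) else T
    with hu
  have hsg_mem : ∀ n, 1 ≤ n → ∀ i ≤ n, t - r ^ 2 ≤ sg n i ∧ sg n i ≤ t + r ^ 2 := by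
    intro n hn i hin
    have hnpos : (0:ℝ) < n := by exact_mod_cast hn
    have hmesh : (0:ℝ) ≤ 2 * r ^ 2 / n := by positivity
    constructor
    · simp only [hsg]; nlinarith [mul_nonneg (Nat.cast_nonneg (α := ℝ) i) hmesh]
    · have h1 : (i:ℝ) * (2 * r ^ 2 / n) ≤ (n:ℝ) * (2 * r ^ 2 / n) :=
        mul_le_mul_of_nonneg_right (by exact_mod_cast hin) hmesh
      have h2 : (n:ℝ) * (2 * r ^ 2 / n) = 2 * r ^ 2 := by field_simp
      simp only [hsg]; linarith
  have hu0 : ∀ n, u n 0 = 0 := fun n => by simp [hu]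
  have huv : ∀ n k, 1 ≤ k → k ≤ n + 1 → u n k = sg n (k - 1) := by
    intro n k h1 h2
    simp only [hu]
    rw [if_neg (by omega), if_pos h2]
  have huk : ∀ n, 1 ≤ n → ∀ i ≤ n, u n (i + 1) = sg n i := by
    intro n hn i hin
    rw [huv n (i + 1) (by omega) (by omega)]
    norm_num
  have huN : ∀ n, u n (n + 2) = T := by
    intro n; simp only [hu]; rw [if_neg (by omega), if_neg (by omega)]
  have humono : ∀ n, 1 ≤ n → Monotone (u n) := by
    intro n hn
    have hnpos : (0:ℝ) < n := by exact_mod_cast hn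
    have hmesh : (0:ℝ) ≤ 2 * r ^ 2 / n := by positivity
    apply monotone_nat_of_le_succ
    intro k
    rcases Nat.eq_zero_or_pos k with rfl | hk
    · rw [hu0 n, huk n hn 0 (Nat.zero_le n)]
      have := (hsg_mem n hn 0 (Nat.zero_le n)).1
      linarith
    · by_cases h2 : k + 1 ≤ n + 1
      · rw [huv n k (by omega) (by omega), huv n (k + 1) (by omega) h2]
        simp only [hsg]
        have hc : ((k - 1 : ℕ) : ℝ) ≤ ((k + 1 - 1 : ℕ) : ℝ) := by
          exact_mod_cast Nat.sub_le_sub_right (by omega) 1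
        nlinarith
      · by_cases h3 : k ≤ n + 1
        · have hkn : k = n + 1 := by omega
          subst hkn
          rw [huv n (n + 1) (by omega) le_rfl]
          have h4 : sg n (n + 1 - 1) ≤ t + r ^ 2 := by
            have : n + 1 - 1 = n := by omega
            rw [this]
            exact (hsg_mem n hn n le_rfl).2
          have h5 : u n (n + 2) = T := huN n
          rw [h5]
          simp only [hTdef]
          linarith
        · simp only [hu]
          rw [if_neg (by omega), if_neg (by omega), if_neg (by omega), if_neg (by omega)]
  have hupos : ∀ n, 1 ≤ n → ∀ k, 0 ≤ u n k := by
    intro n hn k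
    have := (humono n hn) (Nat.zero_le k)
    rw [hu0 n] at this
    exact this
  -- the events
  set B2 : Set (EuclideanSpace ℝ (Fin d)) := Metric.closedBall z (2 * r) with hB2
  set B0 : Set (EuclideanSpace ℝ (Fin d)) := Metric.closedBall 0 (2 * r) with hB0
  set G : ℕ → ℕ → Set Ω := fun n i =>
    {ω | W (u n (i + 1)) ω - W (u n 0) ω ∈ B2 ∧ ∀ j < i, W (u n (j + 1)) ω - W (u n 0) ω ∉ B2}
    with hG
  set HH : ℕ → ℕ → Set Ω := fun n i =>
    {ω | W (u n (n + 2)) ω - W (u n (i + 1)) ω ∈ B0} with hHH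
  set B4 : Set Ω := {ω | W T ω - W 0 ω ∈ Metric.closedBall z (4 * r)} with hB4set
  set D : ℕ → Set Ω := fun n => ⋃ i ∈ Finset.range (n + 1), G n i with hD
  have hWm : ∀ (a b : ℝ), Measurable fun ω => W a ω - W b ω :=
    fun a b => (hW.meas a).sub (hW.meas b)
  have hGmeas : ∀ n i, MeasurableSet (G n i) := by
    intro n i
    have hdec : G n i = ((fun ω => W (u n (i + 1)) ω - W (u n 0) ω) ⁻¹' B2)
        ∩ ⋂ (j : ℕ), ⋂ (_ : j < i), ((fun ω => W (u n (j + 1)) ω - W (u n 0) ω) ⁻¹' B2)ᶜ := by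
      ext ω; simp [hG, Set.mem_iInter]
    rw [hdec]
    exact ((hWm _ _) measurableSet_closedBall).inter
      (MeasurableSet.iInter fun j => MeasurableSet.iInter fun hj =>
        ((hWm _ _) measurableSet_closedBall).compl)
  have hGdisj : ∀ n, ∀ i j : ℕ, i < j → Disjoint (G n i) (G n j) := by
    intro n i j hij
    rw [Set.disjoint_left]
    rintro ω ⟨hi1, _⟩ ⟨_, hj2⟩
    exact hj2 i hij hi1
  -- the upper bound event
  have hB4le : ℙ B4 ≤ KU * ENNReal.ofReal (r ^ d) := by
    refine le_trans (measure_ball_upper hW hq hTq z (ρ := 4 * r) (by positivity)) (le_of_eq ?_)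
    rw [hKU, mul_pow, ENNReal.ofReal_mul (by positivity)]
    ring
  -- the per-n bound
  have hDn : ∀ n, 1 ≤ n → KL * ℙ (D n) ≤ KU * ENNReal.ofReal (r ^ d) := by
    intro n hn
    have hstep : ∀ i ∈ Finset.range (n + 1), KL * ℙ (G n i) ≤ ℙ (G n i ∩ B4) := by
      intro i hi
      have hi' : i ≤ n := by
        have := Finset.mem_range.mp hi; omega
      have hukk := huk n hn i hi'
      have hsgi := hsg_mem n hn i hi'
      have hHlow : KL ≤ ℙ (HH n i) := by
        have hlow := measure_ball_lower hW (s := sg n i) (T := T) (r := r)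
          (by nlinarith [hsgi.1, ha0]) hr0
          (by simp only [hTdef]; linarith [hsgi.2]) (by simp only [hTdef]; linarith [hsgi.1])
        simp only [hHH, hB0]
        rw [huN n, hukk]
        exact hlow
      have hprod : ℙ (G n i ∩ HH n i) = ℙ (G n i) * ℙ (HH n i) :=
        indep_key hW (n + 2) (u n) (humono n hn) (hupos n hn) i (by omega) B2 B0
          measurableSet_closedBall measurableSet_closedBall
      have hsub : G n i ∩ HH n i ⊆ B4 := by
        rintro ω ⟨hGω, hHω⟩
        simp only [hG, Set.mem_setOf_eq] at hGω
        simp only [hHH, Set.mem_setOf_eq] at hHω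
        rw [hukk, hu0 n] at hGω
        rw [huN n, hukk] at hHω
        simp only [hB4set, Set.mem_setOf_eq]
        rw [Metric.mem_closedBall, dist_eq_norm]
        have e : (W T ω - W 0 ω) - z
            = ((W (sg n i) ω - W 0 ω) - z) + (W T ω - W (sg n i) ω) := by abel
        rw [e]
        have h1 : ‖(W (sg n i) ω - W 0 ω) - z‖ ≤ 2 * r := by
          have := hGω.1
          rw [hB2, Metric.mem_closedBall, dist_eq_norm] at this
          exact this
        have h2 : ‖W T ω - W (sg n i) ω‖ ≤ 2 * r := by
          rw [hB0, Metric.mem_closedBall, dist_zero_right] at hHω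
          exact hHω
        calc ‖((W (sg n i) ω - W 0 ω) - z) + (W T ω - W (sg n i) ω)‖
            ≤ ‖(W (sg n i) ω - W 0 ω) - z‖ + ‖W T ω - W (sg n i) ω‖ := norm_add_le _ _
          _ ≤ 4 * r := by linarith
      calc KL * ℙ (G n i) ≤ ℙ (HH n i) * ℙ (G n i) := mul_le_mul_left hHlow _
        _ = ℙ (G n i ∩ HH n i) := by rw [hprod, mul_comm]
        _ ≤ ℙ (G n i ∩ B4) := measure_mono fun ω hω => ⟨hω.1, hsub hω⟩
    have hdisj' : Set.PairwiseDisjoint (↑(Finset.range (n + 1))) (fun i => G n i ∩ B4) := by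
      intro i _ j _ hij
      rcases lt_or_gt_of_ne hij with h | h
      · exact Disjoint.mono Set.inter_subset_left Set.inter_subset_left (hGdisj n i j h)
      · exact Disjoint.mono Set.inter_subset_left Set.inter_subset_left (hGdisj n j i h).symm
    calc KL * ℙ (D n) ≤ KL * ∑ i ∈ Finset.range (n + 1), ℙ (G n i) :=
          mul_le_mul_right (measure_biUnion_finset_le _ _) _
      _ = ∑ i ∈ Finset.range (n + 1), KL * ℙ (G n i) := Finset.mul_sum _ _ _
      _ ≤ ∑ i ∈ Finset.range (n + 1), ℙ (G n i ∩ B4) := Finset.sum_le_sum hstep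
      _ = ℙ (⋃ i ∈ Finset.range (n + 1), (G n i ∩ B4)) :=
          (measure_biUnion_finset hdisj' fun i _ => (hGmeas n i).inter
            ((hWm T 0) measurableSet_closedBall)).symm
      _ ≤ ℙ B4 := measure_mono (Set.iUnion₂_subset fun i _ => Set.inter_subset_right)
      _ ≤ KU * ENNReal.ofReal (r ^ d) := hB4le
  have hDle : ∀ n, 1 ≤ n → ℙ (D n) ≤ KU * ENNReal.ofReal (r ^ d) / KL := by
    intro n hn
    rw [ENNReal.le_div_iff_mul_le (Or.inl hKL0) (Or.inl hKLtop), mul_comm]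
    exact hDn n hn
  -- limiting argument
  set A : ℕ → Set Ω := fun N => ⋂ (n : ℕ), ⋂ (_ : N + 1 ≤ n), D n with hA
  have hAmono : Monotone A := by
    intro N N' hNN' ω hω
    simp only [hA, Set.mem_iInter] at *
    intro n hn
    exact hω n (by omega)
  have hAcup : ℙ (⋃ N, A N) ≤ KU * ENNReal.ofReal (r ^ d) / KL := by
    rw [hAmono.directed_le.measure_iUnion]
    refine iSup_le fun N => ?_
    refine le_trans (measure_mono ?_) (hDle (N + 1) (by omega))
    intro ω hω
    simp only [hA, Set.mem_iInter] at hω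
    exact hω (N + 1) le_rfl
  have hbad : ℙ {ω | ¬ (W 0 ω = 0 ∧ Continuous fun s => W s ω)} = 0 :=
    ae_iff.mp (hW.start.and hW.cont)
  have hincl : {ω | ∃ s ∈ Set.Icc (t - r ^ 2) (t + r ^ 2), W s ω ∈ Metric.closedBall z r}
      ⊆ {ω | ¬ (W 0 ω = 0 ∧ Continuous fun s => W s ω)} ∪ ⋃ N, A N := by
    intro ω hω
    by_cases hgood : W 0 ω = 0 ∧ Continuous fun s => W s ω
    swap
    · exact Or.inl hgood
    right
    obtain ⟨h0, hcont⟩ := hgood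
    obtain ⟨s₀, hs₀I, hs₀B⟩ := hω
    obtain ⟨δ, hδ0, hδ⟩ := Metric.continuous_iff.mp hcont s₀ r hr0
    obtain ⟨N, hN⟩ := exists_nat_gt (2 * r ^ 2 / δ)
    refine Set.mem_iUnion.mpr ⟨N, ?_⟩
    simp only [hA, Set.mem_iInter]
    intro n hn
    have hn1 : 1 ≤ n := by omega
    have hnpos : (0:ℝ) < n := by exact_mod_cast hn1
    have hmesh0 : (0:ℝ) < 2 * r ^ 2 / n := by positivity
    have hmeshδ : 2 * r ^ 2 / n < δ := by
      rw [div_lt_iff₀ hnpos]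
      have h2 : 2 * r ^ 2 / δ < n := lt_of_lt_of_le hN (by exact_mod_cast (by omega : N ≤ n))
      rw [div_lt_iff₀ hδ0] at h2
      linarith
    set x : ℝ := (s₀ - (t - r ^ 2)) / (2 * r ^ 2 / n) with hx
    have hx0 : 0 ≤ x := div_nonneg (by linarith [hs₀I.1]) hmesh0.le
    have hix : (⌊x⌋₊ : ℝ) ≤ x := Nat.floor_le hx0
    have hxi : x < ⌊x⌋₊ + 1 := Nat.lt_floor_add_one x
    have hxn : x ≤ n := by
      rw [hx, div_le_iff₀ hmesh0]
      have h3 : (n:ℝ) * (2 * r ^ 2 / n) = 2 * r ^ 2 := by field_simp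
      rw [h3]
      linarith [hs₀I.2]
    set i : ℕ := ⌊x⌋₊ with hidef
    have hin : i ≤ n := by
      have : (i : ℝ) ≤ n := le_trans hix hxn
      exact_mod_cast this
    have hxm : x * (2 * r ^ 2 / n) = s₀ - (t - r ^ 2) := div_mul_cancel₀ _ hmesh0.ne'
    have hclose : dist (sg n i) s₀ < δ := by
      rw [Real.dist_eq, abs_sub_lt_iff]
      constructor
      · have h4 : (i:ℝ) * (2 * r ^ 2 / n) ≤ x * (2 * r ^ 2 / n) :=
          mul_le_mul_of_nonneg_right hix hmesh0.le
        simp only [hsg]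
        linarith
      · have h5 : x * (2 * r ^ 2 / n) < ((i:ℝ) + 1) * (2 * r ^ 2 / n) :=
          mul_lt_mul_of_pos_right hxi hmesh0
        simp only [hsg]
        nlinarith
    have hWclose : dist (W (sg n i) ω) (W s₀ ω) < r := hδ _ hclose
    have hmem : W (u n (i + 1)) ω - W (u n 0) ω ∈ B2 := by
      rw [huk n hn1 i hin, hu0 n, h0, sub_zero, hB2, Metric.mem_closedBall]
      have h6 : dist (W s₀ ω) z ≤ r := Metric.mem_closedBall.mp hs₀B
      calc dist (W (sg n i) ω) z ≤ dist (W (sg n i) ω) (W s₀ ω) + dist (W s₀ ω) z :=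
            dist_triangle _ _ _
        _ ≤ 2 * r := by linarith
    have hex : ∃ j, W (u n (j + 1)) ω - W (u n 0) ω ∈ B2 := ⟨i, hmem⟩
    set j₀ : ℕ := Nat.find hex with hj₀
    have hj₀le : j₀ ≤ i := Nat.find_min' hex hmem
    have hj₀mem : ω ∈ G n j₀ := by
      refine ⟨Nat.find_spec hex, fun j hj => ?_⟩
      exact Nat.find_min hex hj
    simp only [hD]
    exact Set.mem_biUnion (Finset.mem_range.mpr (by omega)) hj₀mem
  -- conclusion
  have hfin : ℙ {ω | ∃ s ∈ Set.Icc (t - r ^ 2) (t + r ^ 2), W s ω ∈ Metric.closedBall z r}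
      ≤ KU * ENNReal.ofReal (r ^ d) / KL := by
    calc ℙ {ω | ∃ s ∈ Set.Icc (t - r ^ 2) (t + r ^ 2), W s ω ∈ Metric.closedBall z r}
        ≤ ℙ ({ω | ¬ (W 0 ω = 0 ∧ Continuous fun s => W s ω)} ∪ ⋃ N, A N) :=
          measure_mono hincl
      _ ≤ ℙ {ω | ¬ (W 0 ω = 0 ∧ Continuous fun s => W s ω)} + ℙ (⋃ N, A N) :=
          measure_union_le _ _
      _ = ℙ (⋃ N, A N) := by rw [hbad, zero_add]
      _ ≤ KU * ENNReal.ofReal (r ^ d) / KL := hAcup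
  refine hfin.trans ?_
  have h1 : KU * ENNReal.ofReal (r ^ d) / KL = (KU / KL) * ENNReal.ofReal (r ^ d) := by
    rw [div_eq_mul_inv, div_eq_mul_inv, mul_right_comm]
  have hrd : (0:ℝ) ≤ r ^ d := by positivity
  calc KU * ENNReal.ofReal (r ^ d) / KL
      = KU / KL * ENNReal.ofReal (r ^ d) := h1
    _ = ENNReal.ofReal ((KU / KL).toReal * r ^ d) := by
        rw [ENNReal.ofReal_mul ENNReal.toReal_nonneg, ENNReal.ofReal_toReal hKK]
    _ ≤ ENNReal.ofReal (((KU / KL).toReal + 1) * r ^ d) :=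
        ENNReal.ofReal_le_ofReal (by nlinarith [ENNReal.toReal_nonneg (a := KU / KL)])
end
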